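/- arXiv:1401.0134 — 2 statements merged into one kernel-verified Lean document; each statement's English description precedes it below -/
import Mathlib

section
/- Let A be an n×n copositive matrix and let u be a zero of A. Then the following are equivalent: (a) u is a minimal zero of A; (b) every zero v of A with Supp(v) ⊆ Supp(u) satisfies v = μu for some μ > 0. -/
open Matrix

/-- A symmetric matrix `A` is copositive if `xᵀ A x ≥ 0` for all entrywise nonnegative `x`. -/
def Copositive {n : ℕ} (A : Matrix (Fin n) (Fin n) ℝ) : Prop :=
  A.IsSymm ∧ ∀ x : Fin n → ℝ, (∀ i, 0 ≤ x i) → 0 ≤ x ⬝ᵥ A.mulVec x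

/-- The support of a vector. -/
def Supp {ι : Type*} (u : ι → ℝ) : Set ι := {i | u i ≠ 0}

/-- A zero of a copositive matrix: a nonzero nonnegative vector `u` with `uᵀ A u = 0`. -/
def IsZeroOf {n : ℕ} (A : Matrix (Fin n) (Fin n) ℝ) (u : Fin n → ℝ) : Prop :=
  u ≠ 0 ∧ (∀ i, 0 ≤ u i) ∧ u ⬝ᵥ A.mulVec u = 0

/-- A minimal zero: a zero such that no zero has support strictly contained in its support. -/
def IsMinimalZeroOf {n : ℕ} (A : Matrix (Fin n) (Fin n) ℝ) (u : Fin n → ℝ) : Prop :=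
  IsZeroOf A u ∧ ¬ ∃ v, IsZeroOf A v ∧ Supp v ⊂ Supp u

/-- The principal submatrix of `A` with rows and columns in `I`. -/
def subMat {n : ℕ} (A : Matrix (Fin n) (Fin n) ℝ) (I : Finset (Fin n)) :
    Matrix {i // i ∈ I} {i // i ∈ I} ℝ :=
  A.submatrix Subtype.val Subtype.val

/-- The subvector of `u` with indices in `I`. -/
def subVec {n : ℕ} (u : Fin n → ℝ) (I : Finset (Fin n)) : {i // i ∈ I} → ℝ :=
  fun i => u i.val

/-- Irreducibility of a copositive matrix `A` with respect to a set `M` of matrices. -/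
def IrreducibleWrtSet {n : ℕ} (A : Matrix (Fin n) (Fin n) ℝ)
    (M : Set (Matrix (Fin n) (Fin n) ℝ)) : Prop :=
  ¬ ∃ γ : ℝ, 0 < γ ∧ ∃ B ∈ M, B ≠ 0 ∧ Copositive (A - γ • B)

/-- Irreducibility of a copositive matrix `A` with respect to a single matrix `M`. -/
def IrreducibleWrtMat {n : ℕ} (A M : Matrix (Fin n) (Fin n) ℝ) : Prop :=
  ¬ ∃ γ : ℝ, 0 < γ ∧ Copositive (A - γ • M)

/-- An extremal element of a cone `K` of vectors. -/
def IsExtremalIn {ι : Type*} (K : Set (ι → ℝ)) (u : ι → ℝ) : Prop :=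
  u ∈ K ∧ u ≠ 0 ∧ ∀ v w, v ∈ K → w ∈ K → u = v + w →
    (∃ a : ℝ, 0 ≤ a ∧ v = a • u) ∧ (∃ b : ℝ, 0 ≤ b ∧ w = b • u)

/-- The matrix with entries 1 at positions `(i,j)` and `(j,i)` and 0 elsewhere. -/
def Eij {n : ℕ} (i j : Fin n) : Matrix (Fin n) (Fin n) ℝ :=
  fun a b => if (a = i ∧ b = j) ∨ (a = j ∧ b = i) then 1 else 0

/-!
If `v` is a zero with `Supp v ⊆ Supp u`, copositivity forces `(A u)ᵢ = 0` on `Supp u`, so the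
cross term `vᵀ A u` vanishes and every `u - t v` has `(u - t v)ᵀ A (u - t v) = 0`. Taking the
largest `t` with `u - t v ≥ 0` kills at least one coordinate of `Supp u`; by minimality `u - t v`
is then not a zero, hence it vanishes and `v = t⁻¹ u`.
-/

lemma dotProduct_mulVec_comm_of_isSymm {ι R : Type*} [Fintype ι] [CommSemiring R]
    {A : Matrix ι ι R} (hA : A.IsSymm) (x y : ι → R) : x ⬝ᵥ A *ᵥ y = y ⬝ᵥ A *ᵥ x := by
  rw [dotProduct_mulVec, ← mulVec_transpose, hA.eq, dotProduct_comm]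

lemma dotProduct_mulVec_add_smul {ι R : Type*} [Fintype ι] [CommRing R] {A : Matrix ι ι R}
    (hA : A.IsSymm) (u v : ι → R) (t : R) :
    (u + t • v) ⬝ᵥ A *ᵥ (u + t • v) =
      u ⬝ᵥ A *ᵥ u + 2 * t * (v ⬝ᵥ A *ᵥ u) + t ^ 2 * (v ⬝ᵥ A *ᵥ v) := by
  rw [mulVec_add, mulVec_smul, add_dotProduct, smul_dotProduct, dotProduct_add, dotProduct_smul,
    dotProduct_add, dotProduct_smul, dotProduct_mulVec_comm_of_isSymm hA u v]
  simp only [smul_eq_mul]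
  ring

lemma nonneg_of_forall_nonneg_quadratic {c d : ℝ}
    (h : ∀ t : ℝ, 0 ≤ t → 0 ≤ 2 * t * c + t ^ 2 * d) : 0 ≤ c := by
  by_contra! hc
  set t := -c / (|d| + 1)
  have ht : 0 < t := div_pos (neg_pos.2 hc) (by positivity)
  have htd : t * (|d| + 1) = -c := div_mul_cancel₀ _ (by positivity)
  nlinarith [h t ht.le, le_abs_self d, mul_pos ht ht]

lemma supp_smul {ι : Type*} {μ : ℝ} (hμ : μ ≠ 0) (u : ι → ℝ) : Supp (μ • u) = Supp u := by
  ext i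
  simp [Supp, hμ]

lemma exists_pos_sub_smul_nonneg_supp_ssubset {ι : Type*} [Fintype ι] {u v : ι → ℝ}
    (hu : ∀ i, 0 ≤ u i) (hv : ∀ i, 0 ≤ v i) (hv0 : v ≠ 0) (hvs : Supp v ⊆ Supp u) :
    ∃ t : ℝ, 0 < t ∧ (∀ i, 0 ≤ (u - t • v) i) ∧ Supp (u - t • v) ⊂ Supp u := by
  classical
  have hS : (Finset.univ.filter fun i => v i ≠ 0).Nonempty := by
    obtain ⟨i, hi⟩ := Function.ne_iff.1 hv0
    exact ⟨i, Finset.mem_filter.2 ⟨Finset.mem_univ i, hi⟩⟩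
  obtain ⟨i₀, hi₀, hmin⟩ := Finset.exists_min_image _ (fun i => u i / v i) hS
  have hvi₀ : 0 < v i₀ := (hv i₀).lt_of_ne' (Finset.mem_filter.1 hi₀).2
  have hui₀ : 0 < u i₀ := (hu i₀).lt_of_ne' (hvs (Finset.mem_filter.1 hi₀).2)
  refine ⟨u i₀ / v i₀, div_pos hui₀ hvi₀, fun i => ?_, ?_⟩
  · by_cases hvi : v i = 0
    · simpa [hvi] using hu i
    · have hle := hmin i (Finset.mem_filter.2 ⟨Finset.mem_univ i, hvi⟩)
      rw [le_div_iff₀ ((hv i).lt_of_ne' hvi)] at hle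
      simpa using hle
  · have hsub : Supp (u - (u i₀ / v i₀) • v) ⊆ Supp u := fun i hi hui => by
      have hvi : v i = 0 := not_not.1 fun hvi => hvs hvi hui
      simp [Supp, hui, hvi] at hi
    refine (Set.ssubset_iff_of_subset hsub).2 ⟨i₀, hui₀.ne', ?_⟩
    simp [Supp, hvi₀.ne']

namespace Copositive

variable {n : ℕ} {A : Matrix (Fin n) (Fin n) ℝ} {u : Fin n → ℝ}

/-- Copositivity at `u + t eᵢ`, `t ≥ 0`, gives `2 t (A u)ᵢ + t² Aᵢᵢ ≥ 0`. -/
lemma mulVec_nonneg (hA : Copositive A) (hu : ∀ i, 0 ≤ u i) (huz : u ⬝ᵥ A *ᵥ u = 0)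
    (i : Fin n) : 0 ≤ (A *ᵥ u) i := by
  refine nonneg_of_forall_nonneg_quadratic (d := A i i) fun t ht => ?_
  have he : (0 : Fin n → ℝ) ≤ Pi.single i 1 := Pi.single_nonneg.2 zero_le_one
  have hx : ∀ j, 0 ≤ (u + t • Pi.single i 1 : Fin n → ℝ) j := fun j =>
    add_nonneg (hu j) (smul_nonneg ht (he j))
  have := hA.2 _ hx
  rwa [dotProduct_mulVec_add_smul hA.1, huz, zero_add, single_dotProduct, one_mul,
    mulVec_single_one, single_dotProduct, one_mul, col_apply] at this

lemma mulVec_eq_zero_of_mem_supp (hA : Copositive A) (hu : ∀ i, 0 ≤ u i)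
    (huz : u ⬝ᵥ A *ᵥ u = 0) {i : Fin n} (hi : i ∈ Supp u) : (A *ᵥ u) i = 0 := by
  have hterm : ∀ j ∈ Finset.univ, 0 ≤ u j * (A *ᵥ u) j := fun j _ =>
    mul_nonneg (hu j) (hA.mulVec_nonneg hu huz j)
  have := (Finset.sum_eq_zero_iff_of_nonneg hterm).1 huz i (Finset.mem_univ i)
  exact (mul_eq_zero.1 this).resolve_left hi

lemma dotProduct_mulVec_eq_zero_of_supp_subset (hA : Copositive A) (hu : ∀ i, 0 ≤ u i)
    (huz : u ⬝ᵥ A *ᵥ u = 0) {v : Fin n → ℝ} (hvs : Supp v ⊆ Supp u) : v ⬝ᵥ A *ᵥ u = 0 := by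
  refine Finset.sum_eq_zero fun i _ => ?_
  by_cases hvi : v i = 0
  · simp [hvi]
  · simp [hA.mulVec_eq_zero_of_mem_supp hu huz (hvs hvi)]

lemma sub_smul_dotProduct_mulVec_eq_zero (hA : Copositive A) (hu : ∀ i, 0 ≤ u i)
    (huz : u ⬝ᵥ A *ᵥ u = 0) {v : Fin n → ℝ} (hvz : v ⬝ᵥ A *ᵥ v = 0) (hvs : Supp v ⊆ Supp u)
    (t : ℝ) : (u - t • v) ⬝ᵥ A *ᵥ (u - t • v) = 0 := by
  rw [sub_eq_add_neg, ← neg_smul, dotProduct_mulVec_add_smul hA.1, huz, hvz,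
    hA.dotProduct_mulVec_eq_zero_of_supp_subset hu huz hvs]
  ring

end Copositive

theorem stmt5 {n : ℕ} (A : Matrix (Fin n) (Fin n) ℝ) (hA : Copositive A)
    (u : Fin n → ℝ) (hu : IsZeroOf A u) :
    IsMinimalZeroOf A u ↔
      ∀ v, IsZeroOf A v → Supp v ⊆ Supp u → ∃ μ : ℝ, 0 < μ ∧ v = μ • u := by
  constructor
  · rintro ⟨-, hmin⟩ v hv hvs
    obtain ⟨t, ht, hw_nonneg, hw_ssub⟩ :=
      exists_pos_sub_smul_nonneg_supp_ssubset hu.2.1 hv.2.1 hv.1 hvs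
    have hw : u - t • v = 0 := by
      by_contra hw
      have hwz := hA.sub_smul_dotProduct_mulVec_eq_zero hu.2.1 hu.2.2 hv.2.2 hvs t
      exact hmin ⟨_, ⟨hw, hw_nonneg, hwz⟩, hw_ssub⟩
    refine ⟨t⁻¹, inv_pos.2 ht, ?_⟩
    rw [sub_eq_zero.1 hw, smul_smul, inv_mul_cancel₀ ht.ne', one_smul]
  · refine fun h => ⟨hu, fun ⟨v, hv, hvs⟩ => ?_⟩
    obtain ⟨μ, hμ, rfl⟩ := h v hv hvs.subset
    exact hvs.ne (supp_smul hμ.ne' u)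
end

section
/- Let A be an n×n copositive matrix and let i, j ∈ {1,…,n}. Then A is irreducible with respect to E_{ij} if and only if there exists a minimal zero u of A such that (Au)_i = (Au)_j = 0 and u_i + u_j > 0. -/
open Matrix

/-! If `A` cannot be reduced by any `γ • Eij i j`, minimizing `xᵀ (A - γ Eᵢⱼ) x` over the standard
simplex yields points with `(A x)ᵢ, (A x)ⱼ, xᵀ A x = O(γ)` (first-order optimality conditions);
a limit point `u` as `γ → 0` is a zero of `A` with `(A u)ᵢ = (A u)ⱼ = 0`. If `uᵢ = uⱼ = 0`, then
`Eᵢⱼ u = 0`, and subtracting from each negative witness the largest multiple of `u` keeping it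
nonnegative shows that `A` stays irreducible on a face with one vertex fewer; induction on the face
ends with `uᵢ + uⱼ > 0`. Among such zeros one of minimal support is a minimal zero: a zero `z` with
smaller support splits `u = t z + (u - t z)` into two zeros, and `A u ≥ 0` termwise passes the
conditions on to both, so one of them would have smaller support.

Conversely, if `A - γ Eᵢⱼ` were copositive, such a zero `u` of `A` would also be a zero of it, so
`(A - γ Eᵢⱼ) u ≥ 0`, i.e. `-γ uⱼ ≥ 0` and `-γ uᵢ ≥ 0`, contradicting `uᵢ + uⱼ > 0`. -/

open Finset Filter Topology

section QuadraticForm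

variable {ι : Type*} [Fintype ι]

lemma nonneg_of_forall_small_quadratic_nonneg {a b ε : ℝ} (hε : 0 < ε)
    (h : ∀ t, 0 < t → t ≤ ε → 0 ≤ 2 * t * a + t ^ 2 * b) : 0 ≤ a := by
  by_contra! ha
  have hc : 0 < -a / (|b| + 1) := div_pos (neg_pos.mpr ha) (by positivity)
  set t := min ε (-a / (|b| + 1))
  have ht : 0 < t := lt_min hε hc
  have htb : t * (|b| + 1) ≤ -a := (le_div_iff₀ (by positivity)).mp (min_le_right _ _)
  nlinarith [h t ht (min_le_left _ _), le_abs_self b]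

lemma dotProduct_mulVec_comm {B : Matrix ι ι ℝ} (hB : B.IsSymm) (x y : ι → ℝ) :
    x ⬝ᵥ B *ᵥ y = y ⬝ᵥ B *ᵥ x := by
  rw [dotProduct_mulVec, ← mulVec_transpose, hB.eq, dotProduct_comm]

lemma dotProduct_mulVec_add_smul_s13 {B : Matrix ι ι ℝ} (hB : B.IsSymm) (x d : ι → ℝ) (t : ℝ) :
    (x + t • d) ⬝ᵥ B *ᵥ (x + t • d) =
      x ⬝ᵥ B *ᵥ x + 2 * t * (d ⬝ᵥ B *ᵥ x) + t ^ 2 * (d ⬝ᵥ B *ᵥ d) := by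
  simp only [mulVec_add, mulVec_smul, dotProduct_add, add_dotProduct, dotProduct_smul,
    smul_dotProduct, smul_eq_mul, dotProduct_mulVec_comm hB x d]
  ring

lemma dotProduct_sub_smul_mulVec (A E : Matrix ι ι ℝ) (γ : ℝ) (x y : ι → ℝ) :
    x ⬝ᵥ (A - γ • E) *ᵥ y = x ⬝ᵥ A *ᵥ y - γ * (x ⬝ᵥ E *ᵥ y) := by
  rw [sub_mulVec, smul_mulVec, dotProduct_sub, dotProduct_smul, smul_eq_mul]

lemma dotProduct_mulVec_nonneg_of_forall_le {B : Matrix ι ι ℝ} (hB : B.IsSymm) {x d : ι → ℝ}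
    {ε : ℝ} (hε : 0 < ε)
    (h : ∀ t, 0 < t → t ≤ ε → x ⬝ᵥ B *ᵥ x ≤ (x + t • d) ⬝ᵥ B *ᵥ (x + t • d)) :
    0 ≤ d ⬝ᵥ B *ᵥ x :=
  nonneg_of_forall_small_quadratic_nonneg hε fun t ht htε => by
    have := h t ht htε
    rw [dotProduct_mulVec_add_smul_s13 hB] at this
    linarith

lemma exists_nonneg_sub_smul_eq_zero {u v : ι → ℝ} (hu : ∀ k, 0 ≤ u k) (hv : ∀ k, 0 ≤ v k)
    (hv0 : v ≠ 0) :
    ∃ t : ℝ, 0 ≤ t ∧ (∀ k, 0 ≤ (u - t • v) k) ∧ ∃ l, v l ≠ 0 ∧ (u - t • v) l = 0 := by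
  have hs : (univ.filter fun k => v k ≠ 0).Nonempty := by
    obtain ⟨k, hk⟩ := Function.ne_iff.mp hv0
    exact ⟨k, by simpa using hk⟩
  obtain ⟨l, hl, hmin⟩ := exists_min_image _ (fun k => u k / v k) hs
  have hvl : 0 < v l := (hv l).lt_of_ne' (by simpa using hl)
  refine ⟨u l / v l, div_nonneg (hu l) (hv l), fun k => ?_, l, hvl.ne', ?_⟩
  · rcases (hv k).eq_or_lt' with hk | hk
    · simpa [hk] using hu k
    · have := hmin k (by simpa using hk.ne')
      rw [le_div_iff₀ hk] at this
      simpa using this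
  · simp [div_mul_cancel₀ _ hvl.ne']

end QuadraticForm

section Copositive

variable {n : ℕ} {A : Matrix (Fin n) (Fin n) ℝ}

lemma Copositive.mulVec_nonneg_s13 (hA : Copositive A) {u : Fin n → ℝ} (hu : ∀ k, 0 ≤ u k)
    (huA : u ⬝ᵥ A *ᵥ u = 0) (k : Fin n) : 0 ≤ (A *ᵥ u) k := by
  have key := dotProduct_mulVec_nonneg_of_forall_le hA.1 (x := u) (d := Pi.single k 1)
    one_pos fun t ht _ => by
      rw [huA]
      refine hA.2 _ fun l => add_nonneg (hu l) (smul_nonneg ht.le ?_)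
      rcases eq_or_ne l k with rfl | hl <;> simp [*]
  simpa using key

lemma Copositive.dotProduct_mulVec_nonneg (hA : Copositive A) {u v : Fin n → ℝ}
    (hu : ∀ k, 0 ≤ u k) (huA : u ⬝ᵥ A *ᵥ u = 0) (hv : ∀ k, 0 ≤ v k) : 0 ≤ v ⬝ᵥ A *ᵥ u :=
  sum_nonneg fun k _ => mul_nonneg (hv k) (hA.mulVec_nonneg_s13 hu huA k)

lemma Copositive.dotProduct_mulVec_eq_zero_of_add (hA : Copositive A) {v w : Fin n → ℝ}
    (hv : ∀ k, 0 ≤ v k) (hw : ∀ k, 0 ≤ w k) (hvA : v ⬝ᵥ A *ᵥ v = 0)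
    (h : (v + w) ⬝ᵥ A *ᵥ (v + w) = 0) : w ⬝ᵥ A *ᵥ w = 0 := by
  have hexp := dotProduct_mulVec_add_smul_s13 hA.1 v w 1
  rw [one_smul] at hexp
  have := hA.dotProduct_mulVec_nonneg hv hvA hw
  have := hA.2 w hw
  nlinarith

lemma Copositive.mulVec_eq_zero_of_add (hA : Copositive A) {v w : Fin n → ℝ}
    (hv : ∀ k, 0 ≤ v k) (hw : ∀ k, 0 ≤ w k) (hvA : v ⬝ᵥ A *ᵥ v = 0) (hwA : w ⬝ᵥ A *ᵥ w = 0)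
    {k : Fin n} (h : (A *ᵥ (v + w)) k = 0) : (A *ᵥ v) k = 0 ∧ (A *ᵥ w) k = 0 := by
  rw [mulVec_add, Pi.add_apply] at h
  have := hA.mulVec_nonneg_s13 hv hvA k
  have := hA.mulVec_nonneg_s13 hw hwA k
  constructor <;> linarith

end Copositive

section Eij

variable {n : ℕ} (i j : Fin n)

lemma Eij_isSymm : (Eij i j).IsSymm := by
  ext a b
  simp only [Eij, transpose_apply]
  exact if_congr (by tauto) rfl rfl

lemma Eij_apply (a b : Fin n) :
    Eij i j a b = if a = i then (Pi.single j 1 : Fin n → ℝ) b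
      else if a = j then (Pi.single i 1 : Fin n → ℝ) b else 0 := by
  unfold Eij
  by_cases ha : a = i <;> by_cases hb : b = j <;> by_cases ha' : a = j <;> by_cases hb' : b = i <;>
    simp_all

lemma Eij_mulVec_apply (x : Fin n → ℝ) (k : Fin n) :
    (Eij i j *ᵥ x) k = if k = i then x j else if k = j then x i else 0 := by
  simp only [mulVec, dotProduct, Eij_apply]
  split_ifs <;> simp [Pi.single_apply]

lemma Eij_mulVec_apply_left (x : Fin n → ℝ) : (Eij i j *ᵥ x) i = x j := by
  simp [Eij_mulVec_apply]

lemma Eij_mulVec_apply_right (x : Fin n → ℝ) : (Eij i j *ᵥ x) j = x i := by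
  rw [Eij_mulVec_apply]; split_ifs <;> simp_all

lemma dotProduct_Eij_mulVec (x : Fin n → ℝ) :
    x ⬝ᵥ Eij i j *ᵥ x = (if i = j then 1 else 2) * (x i * x j) := by
  simp only [dotProduct, Eij_mulVec_apply, mul_ite, mul_zero]
  rw [sum_ite, sum_ite]
  rcases eq_or_ne i j with rfl | hij
  · simp [filter_eq', filter_ne']
  · simp [filter_eq', filter_ne', hij, hij.symm]
    ring

lemma dotProduct_Eij_mulVec_nonneg {x : Fin n → ℝ} (hx : ∀ k, 0 ≤ x k) :
    0 ≤ x ⬝ᵥ Eij i j *ᵥ x := by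
  rw [dotProduct_Eij_mulVec]
  have := mul_nonneg (hx i) (hx j)
  split_ifs <;> linarith

lemma mulVec_sub_smul_Eij_apply_left (A : Matrix (Fin n) (Fin n) ℝ) (γ : ℝ) (x : Fin n → ℝ) :
    ((A - γ • Eij i j) *ᵥ x) i = (A *ᵥ x) i - γ * x j := by
  simp [sub_mulVec, smul_mulVec, Eij_mulVec_apply_left]

lemma mulVec_sub_smul_Eij_apply_right (A : Matrix (Fin n) (Fin n) ℝ) (γ : ℝ) (x : Fin n → ℝ) :
    ((A - γ • Eij i j) *ᵥ x) j = (A *ᵥ x) j - γ * x i := by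
  simp [sub_mulVec, smul_mulVec, Eij_mulVec_apply_right]

end Eij

section ZeroConditions

variable {n : ℕ} {A : Matrix (Fin n) (Fin n) ℝ} {i j : Fin n}

lemma irreducibleWrtMat_Eij_of_isZeroOf {u : Fin n → ℝ} (hu : IsZeroOf A u)
    (hi : (A *ᵥ u) i = 0) (hj : (A *ᵥ u) j = 0) (hij : 0 < u i + u j) :
    IrreducibleWrtMat A (Eij i j) := by
  rintro ⟨γ, hγ, hB⟩
  obtain ⟨-, hu0, huA⟩ := hu
  have huB : u ⬝ᵥ (A - γ • Eij i j) *ᵥ u = 0 := by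
    have := hB.2 u hu0
    have := dotProduct_Eij_mulVec_nonneg i j hu0
    rw [dotProduct_sub_smul_mulVec, huA] at *
    nlinarith
  have hBi := hB.mulVec_nonneg_s13 hu0 huB i
  have hBj := hB.mulVec_nonneg_s13 hu0 huB j
  rw [mulVec_sub_smul_Eij_apply_left, hi] at hBi
  rw [mulVec_sub_smul_Eij_apply_right, hj] at hBj
  nlinarith

def IsEijZeroOf (A : Matrix (Fin n) (Fin n) ℝ) (i j : Fin n) (u : Fin n → ℝ) : Prop :=
  IsZeroOf A u ∧ (A *ᵥ u) i = 0 ∧ (A *ᵥ u) j = 0 ∧ 0 < u i + u j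

lemma IsEijZeroOf.exists_ssubset (hA : Copositive A) {u z : Fin n → ℝ}
    (hu : IsEijZeroOf A i j u) (hz : IsZeroOf A z) (hzu : Supp z ⊂ Supp u) :
    ∃ v, IsEijZeroOf A i j v ∧ Supp v ⊂ Supp u := by
  obtain ⟨⟨hu0, hunn, huA⟩, hui, huj, hij⟩ := hu
  obtain ⟨hz0, hznn, hzA⟩ := hz
  obtain ⟨t, ht, hw, l, hzl, hwl⟩ := exists_nonneg_sub_smul_eq_zero hunn hznn hz0
  set v := t • z
  set w := u - t • z
  have huvw : u = v + w := by simp [v, w]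
  have hvnn : ∀ k, 0 ≤ v k := fun k => mul_nonneg ht (hznn k)
  have hvA : v ⬝ᵥ A *ᵥ v = 0 := by simp [v, mulVec_smul, hzA]
  have hwA : w ⬝ᵥ A *ᵥ w = 0 :=
    hA.dotProduct_mulVec_eq_zero_of_add hvnn hw hvA (huvw ▸ huA)
  have hzsub : ∀ k, u k = 0 → z k = 0 := fun k hk => by
    by_contra hzk
    exact hzu.1 hzk hk
  have ht0 : t ≠ 0 := by
    rintro rfl
    exact hzl (hzsub l (by simpa [w] using hwl))
  have hvu : Supp v ⊂ Supp u := by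
    simpa [v, Supp, ht0] using hzu
  have hwu : Supp w ⊂ Supp u := by
    refine Set.ssubset_iff_subset_ne.mpr ⟨fun r hr hr' => hr ?_, fun h => ?_⟩
    · simp [w, hr', hzsub r hr']
    · exact (h ▸ (hzu.1 hzl : l ∈ Supp u)) hwl
  have hv0 : v ≠ 0 := fun h => by simpa [v, ht0, hzl] using congrFun h l
  obtain ⟨k, hku, hkz⟩ := Set.exists_of_ssubset hzu
  have hzk : z k = 0 := by simpa [Supp] using hkz
  have hw0 : w ≠ 0 := fun h => hku (by simpa [w, hzk] using congrFun h k)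
  have hAi := hA.mulVec_eq_zero_of_add hvnn hw hvA hwA (huvw ▸ hui)
  have hAj := hA.mulVec_eq_zero_of_add hvnn hw hvA hwA (huvw ▸ huj)
  have hsplit : 0 < v i + v j ∨ 0 < w i + w j := by
    by_contra! h
    have := congrFun huvw i
    have := congrFun huvw j
    simp only [Pi.add_apply] at *
    linarith
  rcases hsplit with h | h
  · exact ⟨v, ⟨⟨hv0, hvnn, hvA⟩, hAi.1, hAj.1, h⟩, hvu⟩
  · exact ⟨w, ⟨⟨hw0, hw, hwA⟩, hAi.2, hAj.2, h⟩, hwu⟩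

lemma exists_isMinimalZeroOf (hA : Copositive A) {u : Fin n → ℝ} (hu : IsEijZeroOf A i j u) :
    ∃ v, IsMinimalZeroOf A v ∧ (A *ᵥ v) i = 0 ∧ (A *ᵥ v) j = 0 ∧ 0 < v i + v j := by
  classical
  have hex : ∃ m, ∃ u, IsEijZeroOf A i j u ∧ (Supp u).ncard = m := ⟨_, u, hu, rfl⟩
  obtain ⟨u, hu, hcard⟩ := Nat.find_spec hex
  refine ⟨u, ⟨hu.1, fun ⟨z, hz, hzu⟩ => ?_⟩, hu.2⟩
  obtain ⟨v, hv, hvu⟩ := hu.exists_ssubset hA hz hzu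
  exact (Set.ncard_lt_ncard hvu).not_ge (hcard ▸ Nat.find_min' hex ⟨v, hv, rfl⟩)

end ZeroConditions

section SimplexOn

variable {ι : Type*} [Fintype ι]

def simplexOn (F : Finset ι) : Set (ι → ℝ) :=
  stdSimplex ℝ ι ∩ {x | ∀ k ∉ F, x k = 0}

lemma isCompact_simplexOn (F : Finset ι) : IsCompact (simplexOn F) := by
  refine (isCompact_stdSimplex ℝ ι).inter_right ?_
  simp only [Set.ofPred_forall]
  exact isClosed_iInter fun k => isClosed_iInter fun _ =>
    isClosed_eq (continuous_apply k) continuous_const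

lemma exists_pos_smul_mem_simplexOn {F : Finset ι} {x : ι → ℝ} (hx : ∀ k, 0 ≤ x k)
    (hxF : ∀ k ∉ F, x k = 0) (hx0 : x ≠ 0) : ∃ c : ℝ, 0 < c ∧ c • x ∈ simplexOn F := by
  have hs : 0 < ∑ k, x k := by
    obtain ⟨k, hk⟩ := Function.ne_iff.mp hx0
    exact sum_pos' (fun k _ => hx k) ⟨k, mem_univ k, (hx k).lt_of_ne' hk⟩
  refine ⟨(∑ k, x k)⁻¹, inv_pos.mpr hs,
    ⟨fun k => mul_nonneg (inv_nonneg.mpr hs.le) (hx k), ?_⟩, fun k hk => by simp [hxF k hk]⟩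
  simp only [Pi.smul_apply, smul_eq_mul, ← mul_sum]
  exact inv_mul_cancel₀ hs.ne'

lemma add_smul_single_sub_single_mem_simplexOn [DecidableEq ι] {F : Finset ι} {x : ι → ℝ}
    (hx : x ∈ simplexOn F) {k l : ι} (hk : k ∈ F) (hl : l ∈ F) {t : ℝ} (ht : 0 ≤ t)
    (htk : t ≤ x k) : x + t • (Pi.single l 1 - Pi.single k 1) ∈ simplexOn F := by
  obtain ⟨⟨hx0, hx1⟩, hxF⟩ := hx
  refine ⟨⟨fun r => ?_, ?_⟩, fun r hr => ?_⟩
  · rcases eq_or_ne r k with rfl | hrk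
    · rcases eq_or_ne r l with rfl | hrl <;> simp [*]
    · have := hx0 r
      rcases eq_or_ne r l with rfl | hrl <;> simp [*]; positivity
  · simp [sum_add_distrib, ← mul_sum, hx1]
  · have hrk : r ≠ k := by rintro rfl; exact hr hk
    have hrl : r ≠ l := by rintro rfl; exact hr hl
    simp [hxF r hr, hrk, hrl]

/-- Moving mass from `k` to any `l ∈ F` cannot decrease the form, so `(B x)ₖ` is minimal over `F`
and hence at most the `x`-weighted average `xᵀ B x`. -/
lemma mulVec_apply_le_of_isMinOn [DecidableEq ι] {B : Matrix ι ι ℝ} (hB : B.IsSymm)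
    {F : Finset ι} {x : ι → ℝ} (hx : x ∈ simplexOn F)
    (hmin : IsMinOn (fun y => y ⬝ᵥ B *ᵥ y) (simplexOn F) x) {k : ι} (hk : 0 < x k) :
    (B *ᵥ x) k ≤ x ⬝ᵥ B *ᵥ x := by
  have hkF : k ∈ F := by
    by_contra h
    exact hk.ne' (hx.2 k h)
  have hle : ∀ l ∈ F, (B *ᵥ x) k ≤ (B *ᵥ x) l := fun l hl => by
    have := dotProduct_mulVec_nonneg_of_forall_le hB hk fun t ht htk =>
      hmin (add_smul_single_sub_single_mem_simplexOn hx hkF hl ht.le htk)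
    simpa [sub_dotProduct] using this
  calc (B *ᵥ x) k = ∑ l, x l * (B *ᵥ x) k := by rw [← sum_mul, hx.1.2, one_mul]
    _ ≤ ∑ l, x l * (B *ᵥ x) l := sum_le_sum fun l _ => by
      by_cases hl : l ∈ F
      · exact mul_le_mul_of_nonneg_left (hle l hl) (hx.1.1 l)
      · simp [hx.2 l hl]

end SimplexOn

lemma exists_mem_forall_pos_of_monotone {α : Type*} {s : Finset α} {P : α → ℝ → Prop}
    (hP : ∀ a γ γ', γ ≤ γ' → P a γ → P a γ') (h : ∀ γ > 0, ∃ a ∈ s, P a γ) :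
    ∃ a ∈ s, ∀ γ > 0, P a γ := by
  by_contra! hne
  have : ∀ a, ∃ γ > 0, a ∈ s → ¬ P a γ := fun a => by
    by_cases ha : a ∈ s
    · obtain ⟨γ, hγ, hPa⟩ := hne a ha
      exact ⟨γ, hγ, fun _ => hPa⟩
    · exact ⟨1, one_pos, fun h => (ha h).elim⟩
  choose γ hγ hPγ using this
  obtain ⟨a, ha, -⟩ := h 1 one_pos
  have hs : s.Nonempty := ⟨a, ha⟩
  obtain ⟨b, hb, hPb⟩ := h (s.inf' hs γ) ((lt_inf'_iff hs).mpr fun a _ => hγ a)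
  exact hPγ b hb (hP b _ _ (inf'_le γ hb) hPb)

section IrreducibleOnFace

variable {n : ℕ} {A E : Matrix (Fin n) (Fin n) ℝ}

/-- Irreducibility of the principal submatrices of `A` and `E` on `F`, stated through vectors
supported in `F`. -/
def IrreducibleWrtMatOn (A E : Matrix (Fin n) (Fin n) ℝ) (F : Finset (Fin n)) : Prop :=
  ∀ γ : ℝ, 0 < γ → ∃ x : Fin n → ℝ, (∀ k, 0 ≤ x k) ∧ (∀ k ∉ F, x k = 0) ∧ x ⬝ᵥ (A - γ • E) *ᵥ x < 0

lemma IrreducibleWrtMat.irreducibleWrtMatOn_univ (hA : A.IsSymm) (hE : E.IsSymm)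
    (h : IrreducibleWrtMat A E) : IrreducibleWrtMatOn A E univ := fun γ hγ => by
  have hB : (A - γ • E).IsSymm := hA.sub (hE.smul γ)
  by_contra! hx
  exact h ⟨γ, hγ, hB, fun x hx0 => hx x hx0 fun k hk => (hk (mem_univ k)).elim⟩

lemma IrreducibleWrtMatOn.exists_erase (hA : Copositive A) (hE : E.IsSymm)
    (hEnn : ∀ x : Fin n → ℝ, (∀ k, 0 ≤ x k) → 0 ≤ x ⬝ᵥ E *ᵥ x) {F : Finset (Fin n)}
    (hF : IrreducibleWrtMatOn A E F) {u : Fin n → ℝ} (hu : IsZeroOf A u)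
    (huF : ∀ k ∉ F, u k = 0) (hEu : E *ᵥ u = 0) :
    ∃ l ∈ F, IrreducibleWrtMatOn A E (F.erase l) := by
  obtain ⟨hu0, hunn, huA⟩ := hu
  refine exists_mem_forall_pos_of_monotone
    (fun l γ γ' hγ ⟨x, hx0, hxF, hxB⟩ => ⟨x, hx0, hxF, ?_⟩) fun γ hγ => ?_
  · rw [dotProduct_sub_smul_mulVec] at hxB ⊢
    nlinarith [hEnn x hx0]
  obtain ⟨x, hx0, hxF, hxB⟩ := hF γ hγ
  obtain ⟨t, ht, hy0, l, hul, hyl⟩ := exists_nonneg_sub_smul_eq_zero hx0 hunn hu0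
  have hlF : l ∈ F := by
    by_contra h
    exact hul (huF l h)
  refine ⟨l, hlF, x - t • u, hy0, fun k hk => ?_, ?_⟩
  · rcases eq_or_ne k l with rfl | hkl
    · exact hyl
    · have hkF : k ∉ F := fun h => hk (mem_erase.mpr ⟨hkl, h⟩)
      simp [hxF k hkF, huF k hkF]
  set y := x - t • u
  have hB : (A - γ • E).IsSymm := hA.1.sub (hE.smul γ)
  have huBy : u ⬝ᵥ (A - γ • E) *ᵥ y = u ⬝ᵥ A *ᵥ y := by
    rw [dotProduct_sub_smul_mulVec, dotProduct_mulVec_comm hE, hEu]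
    simp
  have huBu : u ⬝ᵥ (A - γ • E) *ᵥ u = 0 := by
    rw [dotProduct_sub_smul_mulVec, hEu, huA]
    simp
  have huAy : 0 ≤ u ⬝ᵥ A *ᵥ y := by
    rw [dotProduct_mulVec_comm hA.1]
    exact hA.dotProduct_mulVec_nonneg hunn huA hy0
  have hexp := dotProduct_mulVec_add_smul_s13 hB y u t
  rw [show y + t • u = x by simp [y], huBu, huBy] at hexp
  nlinarith

lemma exists_mem_simplexOn_mulVec_le (hA : Copositive A) {i j : Fin n} {F : Finset (Fin n)}
    {γ : ℝ} (hγ : 0 < γ) (hF : ∃ x : Fin n → ℝ, (∀ k, 0 ≤ x k) ∧ (∀ k ∉ F, x k = 0) ∧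
      x ⬝ᵥ (A - γ • Eij i j) *ᵥ x < 0) :
    ∃ x ∈ simplexOn F, (A *ᵥ x) i ≤ γ ∧ (A *ᵥ x) j ≤ γ ∧ x ⬝ᵥ A *ᵥ x ≤ 2 * γ := by
  have hB : (A - γ • Eij i j).IsSymm := hA.1.sub ((Eij_isSymm i j).smul γ)
  obtain ⟨y, hy0, hyF, hyB⟩ := hF
  obtain ⟨c, hc, hcy⟩ := exists_pos_smul_mem_simplexOn hy0 hyF (by rintro rfl; simp at hyB)
  obtain ⟨x, hx, hmin⟩ := (isCompact_simplexOn F).exists_isMinOn ⟨_, hcy⟩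
    (by fun_prop : Continuous fun x => x ⬝ᵥ (A - γ • Eij i j) *ᵥ x).continuousOn
  have hxB : x ⬝ᵥ (A - γ • Eij i j) *ᵥ x < 0 := (hmin hcy).trans_lt <| by
    simpa [mulVec_smul] using mul_neg_of_pos_of_neg hc (mul_neg_of_pos_of_neg hc hyB)
  have hx0 := hx.1.1
  have hx1 : ∀ k, x k ≤ 1 := fun k => (mem_Icc_of_mem_stdSimplex hx.1 k).2
  have hxA := hA.2 x hx0
  rw [dotProduct_sub_smul_mulVec, dotProduct_Eij_mulVec] at hxB
  have hxij : 0 < x i * x j := by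
    split_ifs at hxB <;> nlinarith
  have hxi : 0 < x i := pos_of_mul_pos_left hxij (hx0 j)
  have hxj : 0 < x j := pos_of_mul_pos_right hxij (hx0 i)
  have hBi := mulVec_apply_le_of_isMinOn hB hx hmin hxi
  have hBj := mulVec_apply_le_of_isMinOn hB hx hmin hxj
  rw [mulVec_sub_smul_Eij_apply_left, dotProduct_sub_smul_mulVec, dotProduct_Eij_mulVec] at hBi
  rw [mulVec_sub_smul_Eij_apply_right, dotProduct_sub_smul_mulVec, dotProduct_Eij_mulVec] at hBj
  have hxij1 : x i * x j ≤ 1 := mul_le_one₀ (hx1 i) (hx0 j) (hx1 j)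
  refine ⟨x, hx, ?_, ?_, ?_⟩ <;> split_ifs at hxB hBi hBj <;> nlinarith [hx1 i, hx1 j]

lemma IrreducibleWrtMatOn.exists_zero (hA : Copositive A) {i j : Fin n} {F : Finset (Fin n)}
    (hF : IrreducibleWrtMatOn A (Eij i j) F) :
    ∃ u ∈ simplexOn F, u ⬝ᵥ A *ᵥ u = 0 ∧ (A *ᵥ u) i = 0 ∧ (A *ᵥ u) j = 0 := by
  have hγ : ∀ m : ℕ, (0 : ℝ) < 1 / (m + 1) := fun m => by positivity
  choose x hx hxi hxj hxA using fun m => exists_mem_simplexOn_mulVec_le hA (hγ m) (hF _ (hγ m))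
  obtain ⟨u, hu, φ, hφ, hlim⟩ := (isCompact_simplexOn F).tendsto_subseq hx
  have hle_zero : ∀ f : (Fin n → ℝ) → ℝ, Continuous f →
      (∀ m : ℕ, f (x m) ≤ 2 * (1 / (m + 1))) → f u ≤ 0 := fun f hf hfx => by
    have h2γ : Tendsto (fun m : ℕ => 2 * (1 / ((m : ℝ) + 1))) atTop (𝓝 0) := by
      simpa using tendsto_one_div_add_atTop_nhds_zero_nat.const_mul (2 : ℝ)
    exact le_of_tendsto_of_tendsto' ((hf.tendsto u).comp hlim) (h2γ.comp hφ.tendsto_atTop)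
      fun m => hfx (φ m)
  have huA : u ⬝ᵥ A *ᵥ u = 0 :=
    le_antisymm (hle_zero (fun x => x ⬝ᵥ A *ᵥ x) (by fun_prop) hxA) (hA.2 u hu.1.1)
  refine ⟨u, hu, huA, le_antisymm ?_ (hA.mulVec_nonneg_s13 hu.1.1 huA i),
    le_antisymm ?_ (hA.mulVec_nonneg_s13 hu.1.1 huA j)⟩
  · exact hle_zero (fun x => (A *ᵥ x) i) (by fun_prop) fun m => by linarith [hxi m, hγ m]
  · exact hle_zero (fun x => (A *ᵥ x) j) (by fun_prop) fun m => by linarith [hxj m, hγ m]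

theorem IrreducibleWrtMatOn.exists_isEijZeroOf (hA : Copositive A) {i j : Fin n}
    {F : Finset (Fin n)} (hF : IrreducibleWrtMatOn A (Eij i j) F) : ∃ u, IsEijZeroOf A i j u := by
  induction F using Finset.strongInduction with
  | H F ih =>
    obtain ⟨u, ⟨⟨hunn, hu1⟩, huF⟩, huA, hui, huj⟩ := hF.exists_zero hA
    have hu0 : u ≠ 0 := by
      rintro rfl
      simp at hu1
    by_cases hij : 0 < u i + u j
    · exact ⟨u, ⟨hu0, hunn, huA⟩, hui, huj, hij⟩
    have hEu : Eij i j *ᵥ u = 0 := by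
      funext k
      have := hunn i
      have := hunn j
      rw [Eij_mulVec_apply]
      split_ifs <;> simp <;> linarith
    obtain ⟨l, hl, hFl⟩ := hF.exists_erase hA (Eij_isSymm i j)
      (fun x hx => dotProduct_Eij_mulVec_nonneg i j hx) ⟨hu0, hunn, huA⟩ huF hEu
    exact ih _ (erase_ssubset hl) hFl

end IrreducibleOnFace

theorem stmt13 {n : ℕ} (A : Matrix (Fin n) (Fin n) ℝ) (hA : Copositive A)
    (i j : Fin n) :
    IrreducibleWrtMat A (Eij i j) ↔
      ∃ u, IsMinimalZeroOf A u ∧ A.mulVec u i = 0 ∧ A.mulVec u j = 0 ∧ 0 < u i + u j := by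
  constructor
  · intro h
    obtain ⟨u, hu⟩ := (h.irreducibleWrtMatOn_univ hA.1 (Eij_isSymm i j)).exists_isEijZeroOf hA
    exact exists_isMinimalZeroOf hA hu
  · rintro ⟨u, hu, hi, hj, hij⟩
    exact irreducibleWrtMat_Eij_of_isZeroOf hu.1 hi hj hij
end
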